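/- Let G be a finite connected simple graph with edge set E, let U(x) = ∑_T ∏_{e ∉ E(T)} x_e be its first Symanzik polynomial, let m : E → ℝ satisfy m_e ≠ 0 for every e ∈ E, and let F_0 ∈ ℝ[x_e : e ∈ E] be a polynomial with nonnegative coefficients whose Newton polytope is contained in N[U] + Δ, where Δ = conv{e_1, ..., e_{|E|}} is the standard simplex of unit vectors in ℝ^E. Then the polynomial F = F_0 + U · (∑_{e ∈ E} m_e² x_e) satisfies N[F] = N[U] + Δ, and this Newton polytope is a generalized permutohedron. -/

import Mathlib

/-!
All coefficients involved are nonnegative, so nothing cancels: the support of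
`U · ∑ mₑ² xₑ` is the Minkowski sum of the supports, its Newton polytope is `N[U] + Δ`, and
adding `F₀` does not enlarge it. The points spanning `N[U] + Δ` are `χ(E ∖ T) + e_f` for spanning
trees `T` and edges `f`. Given an edge `[x, y]`, swapping the simplex summands, or applying the
symmetric exchange property of spanning trees, yields points `u, v` of the polytope with
`u + v = x + y` and `u - x = e_i - e_j`. The common midpoint lies on the edge, so `u` does too,
and `y - x` is parallel to `e_i - e_j`.
-/

open MvPolynomial
open scoped Pointwise Classical

section Convex

variable {𝕜 E : Type*} [Field 𝕜] [LinearOrder 𝕜] [IsStrictOrderedRing 𝕜] [AddCommGroup E]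
  [Module 𝕜 E]

theorem left_mem_extremePoints_segment (x y : E) : x ∈ (segment 𝕜 x y).extremePoints 𝕜 := by
  refine ⟨left_mem_segment 𝕜 x y, fun x₁ h₁ x₂ h₂ hx ↦ ?_⟩
  rw [segment_eq_image'] at h₁ h₂
  obtain ⟨s, ⟨hs, -⟩, rfl⟩ := h₁
  obtain ⟨t, ⟨ht, -⟩, rfl⟩ := h₂
  obtain ⟨a, b, ha, hb, hab, hx⟩ := hx
  have hcomb : (a * s + b * t) • (y - x) = 0 := by
    linear_combination (norm := module) hx - hab • x
  rcases smul_eq_zero.mp hcomb with h | h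
  · have : s = 0 := by nlinarith [mul_nonneg ha.le hs, mul_nonneg hb.le ht]
    simp [this]
  · simp [sub_eq_zero.mp h]

variable {P : Set E} {x y : E}

theorem IsExtreme.left_mem_extremePoints (h : IsExtreme 𝕜 P (segment 𝕜 x y)) :
    x ∈ P.extremePoints 𝕜 :=
  h.extremePoints_subset_extremePoints (left_mem_extremePoints_segment x y)

/-- The midpoint of `[x, y]` is also that of `[u, v]`, so by extremality `u` lies on `[x, y]`. -/
theorem IsExtreme.exists_sub_eq_smul_of_add_eq (h : IsExtreme 𝕜 P (segment 𝕜 x y))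
    {u v : E} (hu : u ∈ P) (hv : v ∈ P) (huv : u + v = x + y) (hux : u ≠ x) :
    ∃ c : 𝕜, y - x = c • (u - x) := by
  have hmid : (2⁻¹ : 𝕜) • x + (2⁻¹ : 𝕜) • y ∈ openSegment 𝕜 u v :=
    ⟨2⁻¹, 2⁻¹, by norm_num, by norm_num, by norm_num, by rw [← smul_add, huv, smul_add]⟩
  have hu_seg := h.left_mem_of_mem_openSegment hu hv
    ⟨2⁻¹, 2⁻¹, by norm_num, by norm_num, by norm_num, rfl⟩ hmid
  rw [segment_eq_image'] at hu_seg
  obtain ⟨t, -, rfl⟩ := hu_seg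
  have ht : t ≠ 0 := by rintro rfl; simp at hux
  exact ⟨t⁻¹, by rw [add_sub_cancel_left, smul_smul, inv_mul_cancel₀ ht, one_smul]⟩

end Convex

namespace MvPolynomial

variable {σ R : Type*} [CommSemiring R] [PartialOrder R] [IsStrictOrderedRing R]
  {p q : MvPolynomial σ R}

theorem coeff_mul_nonneg (hp : ∀ d, 0 ≤ p.coeff d) (hq : ∀ d, 0 ≤ q.coeff d) (d : σ →₀ ℕ) :
    0 ≤ (p * q).coeff d := by
  rw [coeff_mul]
  exact Finset.sum_nonneg fun i _ ↦ mul_nonneg (hp i.1) (hq i.2)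

theorem support_add_of_nonneg (hp : ∀ d, 0 ≤ p.coeff d) (hq : ∀ d, 0 ≤ q.coeff d) :
    (p + q).support = p.support ∪ q.support := by
  ext d
  simp only [Finset.mem_union, mem_support_iff, coeff_add, ne_eq,
    add_eq_zero_iff_of_nonneg (hp d) (hq d), not_and_or]

/-- No cancellation: the coefficient of `a + b` in `p * q` is at least `p_a q_b`. -/
theorem support_mul_of_nonneg [DecidableEq σ] (hp : ∀ d, 0 ≤ p.coeff d) (hq : ∀ d, 0 ≤ q.coeff d) :
    (p * q).support = p.support + q.support := by
  refine (support_mul p q).antisymm fun d hd ↦ ?_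
  obtain ⟨a, ha, b, hb, rfl⟩ := Finset.mem_add.mp hd
  rw [mem_support_iff] at ha hb ⊢
  refine (lt_of_lt_of_le ((hp a).lt_of_ne' ha |> mul_pos <| (hq b).lt_of_ne' hb) ?_).ne'
  rw [coeff_mul]
  exact Finset.single_le_sum (a := (a, b)) (f := fun x ↦ p.coeff x.1 * q.coeff x.2)
    (fun i _ ↦ mul_nonneg (hp i.1) (hq i.2)) (Finset.HasAntidiagonal.mem_antidiagonal.mpr rfl)

theorem coeff_sum_monomial_nonneg {α : Type*} (s : Finset α) (D : α → σ →₀ ℕ) {c : α → R}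
    (hc : ∀ a ∈ s, 0 ≤ c a) (d : σ →₀ ℕ) : 0 ≤ (∑ a ∈ s, monomial (D a) (c a)).coeff d := by
  rw [coeff_sum]
  refine Finset.sum_nonneg fun a ha ↦ ?_
  rw [coeff_monomial]
  split_ifs
  exacts [hc a ha, le_rfl]

theorem support_sum_monomial_of_pos {α : Type*} (s : Finset α) (D : α → σ →₀ ℕ) {c : α → R}
    (hc : ∀ a ∈ s, 0 < c a) :
    (↑(∑ a ∈ s, monomial (D a) (c a)).support : Set (σ →₀ ℕ)) = D '' ↑s := by
  ext d
  simp only [Finset.mem_coe, mem_support_iff, coeff_sum, coeff_monomial, Finset.sum_ite,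
    Finset.sum_const_zero, add_zero, Set.mem_image]
  constructor
  · intro h
    obtain ⟨a, ha, -⟩ := Finset.exists_ne_zero_of_sum_ne_zero h
    exact ⟨a, (Finset.mem_filter.mp ha).1, (Finset.mem_filter.mp ha).2⟩
  · rintro ⟨a, ha, rfl⟩
    exact (Finset.sum_pos (fun b hb ↦ hc b (Finset.mem_filter.mp hb).1)
      ⟨a, Finset.mem_filter.mpr ⟨ha, rfl⟩⟩ :
      0 < ∑ b ∈ s with D b = D a, c b).ne'

theorem coeff_sum_C_mul_X_nonneg [Fintype σ] {w : σ → R} (hw : ∀ i, 0 ≤ w i) (d : σ →₀ ℕ) :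
    0 ≤ (∑ i, C (w i) * X i).coeff d := by
  simp_rw [C_mul_X_eq_monomial]
  exact coeff_sum_monomial_nonneg _ _ (fun i _ ↦ hw i) d

theorem coe_support_sum_C_mul_X [Fintype σ] {w : σ → R} (hw : ∀ i, 0 < w i) :
    (↑(∑ i, C (w i) * X i).support : Set (σ →₀ ℕ)) = Set.range fun i ↦ Finsupp.single i 1 := by
  simp_rw [C_mul_X_eq_monomial]
  rw [support_sum_monomial_of_pos _ _ fun i _ ↦ hw i, Finset.coe_univ, Set.image_univ]

end MvPolynomial

section Newton

variable {σ R : Type*}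

def exponentVector : (σ →₀ ℕ) →+ (σ → ℝ) where
  toFun d i := d i
  map_zero' := by ext; simp
  map_add' _ _ := by ext; simp

theorem exponentVector_injective : Function.Injective (exponentVector : (σ →₀ ℕ) →+ (σ → ℝ)) :=
  fun _ _ h ↦ Finsupp.ext fun i ↦ Nat.cast_injective (R := ℝ) (congrFun h i)

theorem exponentVector_single [DecidableEq σ] (i : σ) :
    exponentVector (Finsupp.single i 1) = Pi.single i 1 := by
  ext j
  simp [exponentVector, Finsupp.single_apply, Pi.single_apply, eq_comm]

theorem exponentVector_image_range_single [DecidableEq σ] :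
    exponentVector '' (Set.range fun i ↦ Finsupp.single i 1) =
      Set.range fun i : σ ↦ Pi.single i 1 := by
  rw [← Set.range_comp]
  simp_rw [Function.comp_def, exponentVector_single]

def newtonPolytope [CommSemiring R] (p : MvPolynomial σ R) : Set (σ → ℝ) :=
  convexHull ℝ (exponentVector '' p.support)

variable [CommSemiring R] [PartialOrder R] [IsStrictOrderedRing R] {p q : MvPolynomial σ R}

theorem newtonPolytope_mul_of_nonneg (hp : ∀ d, 0 ≤ p.coeff d) (hq : ∀ d, 0 ≤ q.coeff d) :
    newtonPolytope (p * q) = newtonPolytope p + newtonPolytope q := by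
  rw [newtonPolytope, support_mul_of_nonneg hp hq, Finset.coe_add, Set.image_add, convexHull_add]
  rfl

theorem newtonPolytope_add_of_subset (hp : ∀ d, 0 ≤ p.coeff d) (hq : ∀ d, 0 ≤ q.coeff d)
    (h : newtonPolytope p ⊆ newtonPolytope q) : newtonPolytope (p + q) = newtonPolytope q := by
  refine (convexHull_min ?_ (convex_convexHull ℝ _)).antisymm (convexHull_mono ?_)
  · rw [support_add_of_nonneg hp hq, Finset.coe_union, Set.image_union]
    exact Set.union_subset ((subset_convexHull ℝ _).trans h) (subset_convexHull ℝ _)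
  · rw [support_add_of_nonneg hp hq, Finset.coe_union, Set.image_union]
    exact Set.subset_union_right

end Newton

namespace SimpleGraph

variable {V : Type*} {G T T₁ T₂ : SimpleGraph V}

theorem Reachable.deleteEdges_reachable_or {x v : V} (h : G.Reachable x v) (y : V) :
    (G.deleteEdges {s(x, y)}).Reachable x v ∨ (G.deleteEdges {s(x, y)}).Reachable y v := by
  obtain ⟨p, hp⟩ := h.symm.exists_isPath
  by_cases hxy : s(x, y) ∈ p.edges
  · have hy := p.snd_mem_support_of_mem_edges hxy
    have hx := p.endpoint_notMem_support_takeUntil hp hy (p.adj_of_mem_edges hxy).ne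
    exact .inr (p.takeUntil y hy |>.toDeleteEdge _
      fun h ↦ hx ((p.takeUntil y hy).fst_mem_support_of_mem_edges h)).reachable.symm
  · exact .inl (p.toDeleteEdge _ hxy).reachable.symm

theorem Walk.IsPath.exists_adj_deleteEdges_reachable {A : Set V} {a b : V} {p : G.Walk a b}
    (hp : p.IsPath) (ha : a ∈ A) (hb : b ∉ A) :
    ∃ u ∈ A, ∃ w ∉ A, G.Adj u w ∧
      (G.deleteEdges {s(u, w)}).Reachable a u ∧ (G.deleteEdges {s(u, w)}).Reachable w b := by
  induction p with
  | nil => exact absurd ha hb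
  | @cons a c b hac q ih =>
    rw [Walk.cons_isPath_iff] at hp
    by_cases hc : c ∈ A
    · obtain ⟨u, hu, w, hw, huw, hau, hwb⟩ := ih hp.1 hc hb
      have hne : s(a, c) ≠ s(u, w) := by
        rintro h
        rcases Sym2.eq_iff.mp h with ⟨rfl, rfl⟩ | ⟨rfl, rfl⟩
        exacts [hw hc, hw ha]
      exact ⟨u, hu, w, hw, huw, (deleteEdges_adj.mpr ⟨hac, hne⟩).reachable.trans hau, hwb⟩
    · refine ⟨a, ha, c, hc, hac, .rfl, (q.toDeleteEdge _ fun h ↦ ?_).reachable⟩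
      exact hp.2 (q.fst_mem_support_of_mem_edges h)

/-- Removing the bridge `xy` splits the tree into the components of `x` and `y`; an edge `ab`
across them glues the two halves back into a tree. -/
theorem IsTree.deleteEdges_sup_edge {x y a b : V} (hT : T.IsTree) (hxy : T.Adj x y)
    (ha : (T.deleteEdges {s(x, y)}).Reachable x a)
    (hb : (T.deleteEdges {s(x, y)}).Reachable y b) :
    (T.deleteEdges {s(x, y)} ⊔ edge a b).IsTree := by
  set H := T.deleteEdges {s(x, y)}
  have hab : ¬H.Reachable a b := fun h ↦
    isAcyclic_iff_forall_adj_isBridge.mp hT.isAcyclic hxy ((ha.trans h).trans hb.symm)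
  have hab' : (H ⊔ edge a b).Reachable a b :=
    ((edge_adj a b a b).mpr ⟨.inl ⟨rfl, rfl⟩, fun h ↦ hab (h ▸ .rfl)⟩).reachable.mono le_sup_right
  have hyx : (H ⊔ edge a b).Reachable y x :=
    ((hb.mono le_sup_left).trans hab'.symm).trans (ha.mono le_sup_left).symm
  refine ⟨(connected_iff_exists_forall_reachable _).mpr ⟨x, fun v ↦ ?_⟩,
    (hT.isAcyclic.anti (deleteEdges_le _)).sup_edge_of_not_reachable hab⟩
  rcases (hT.connected.preconnected x v).deleteEdges_reachable_or y with h | h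
  exacts [h.mono le_sup_left, hyx.symm.trans (h.mono le_sup_left)]

theorem edgeSet_deleteEdges_sup_edge {e : Sym2 V} {a b : V} (hab : a ≠ b) :
    (T.deleteEdges {e} ⊔ edge a b).edgeSet = insert s(a, b) (T.edgeSet \ {e}) := by
  rw [edgeSet_sup, edgeSet_deleteEdges, edgeSet_edge_of_ne hab, Set.union_singleton]

theorem IsTree.exists_exchange (h₁ : T₁.IsTree) (h₂ : T₂.IsTree) {e : Sym2 V}
    (he₁ : e ∈ T₁.edgeSet) (he₂ : e ∉ T₂.edgeSet) :
    ∃ f ∈ T₂.edgeSet, f ∉ T₁.edgeSet ∧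
      (∃ T₁' : SimpleGraph V, T₁'.IsTree ∧ T₁'.edgeSet = insert f (T₁.edgeSet \ {e})) ∧
      ∃ T₂' : SimpleGraph V, T₂'.IsTree ∧ T₂'.edgeSet = insert e (T₂.edgeSet \ {f}) := by
  induction e with | h a b
  have hab : T₁.Adj a b := he₁
  set H₁ := T₁.deleteEdges {s(a, b)}
  have hb : ¬H₁.Reachable a b := isAcyclic_iff_forall_adj_isBridge.mp h₁.isAcyclic hab
  obtain ⟨p, hp⟩ := (h₂.connected.preconnected a b).exists_isPath
  obtain ⟨u, hu, w, hw, huw, hau, hwb⟩ :=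
    hp.exists_adj_deleteEdges_reachable (A := {v | H₁.Reachable a v}) .rfl hb
  have huw₁ : ¬T₁.Adj u w := by
    refine fun h ↦ hw (hu.trans (deleteEdges_adj.mpr ⟨h, ?_⟩).reachable)
    rintro (h' : s(u, w) = s(a, b))
    exact he₂ (h' ▸ huw)
  have hbw : H₁.Reachable b w :=
    ((h₁.connected.preconnected a w).deleteEdges_reachable_or b).resolve_left hw
  exact ⟨s(u, w), huw, huw₁, ⟨_, h₁.deleteEdges_sup_edge hab hu hbw,
      edgeSet_deleteEdges_sup_edge huw.ne⟩,
    ⟨_, h₂.deleteEdges_sup_edge huw hau.symm hwb, edgeSet_deleteEdges_sup_edge hab.ne⟩⟩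

end SimpleGraph

section Cotree

variable {V : Type*} (G : SimpleGraph V) [Finite G.edgeSet]

noncomputable def cotreeExponent (T : SimpleGraph V) : G.edgeSet →₀ ℕ :=
  Finsupp.equivFunOnFinite.symm fun e ↦ if (e : Sym2 V) ∈ T.edgeSet then 0 else 1

theorem prod_ite_one_X_eq_monomial_cotreeExponent [Fintype G.edgeSet] (R : Type*)
    [CommSemiring R] (T : SimpleGraph V) :
    ∏ e : G.edgeSet, (if (e : Sym2 V) ∈ T.edgeSet then 1 else X e : MvPolynomial G.edgeSet R) =
      monomial (cotreeExponent G T) 1 := by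
  rw [monomial_eq, C_1, one_mul, Finsupp.prod_fintype _ _ fun _ ↦ pow_zero _]
  refine Finset.prod_congr rfl fun e _ ↦ ?_
  by_cases h : (e : Sym2 V) ∈ T.edgeSet <;> simp [cotreeExponent, h]

theorem cotreeExponent_add_single_eq {T T' : SimpleGraph V} {i j : G.edgeSet}
    (hi : (i : Sym2 V) ∈ T.edgeSet) (hj : (j : Sym2 V) ∉ T.edgeSet)
    (hT' : T'.edgeSet = insert (j : Sym2 V) (T.edgeSet \ {(i : Sym2 V)})) :
    cotreeExponent G T' + Finsupp.single j 1 = cotreeExponent G T + Finsupp.single i 1 := by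
  ext e
  simp only [cotreeExponent, Finsupp.coe_add, Pi.add_apply, Finsupp.coe_equivFunOnFinite_symm,
    Finsupp.single_apply, hT', Set.mem_insert_iff, Set.mem_sdiff, Set.mem_singleton_iff,
    ← Subtype.ext_iff]
  grind

end Cotree

section Exchange

variable {ι : Type*}

def HasSymmetricExchange (S : Set (ι →₀ ℕ)) : Prop :=
  ∀ x ∈ S, ∀ y ∈ S, x ≠ y → ∃ u ∈ S, ∃ v ∈ S, u + v = x + y ∧
    ∃ i j, i ≠ j ∧ u + Finsupp.single j 1 = x + Finsupp.single i 1

theorem HasSymmetricExchange.add_range_single {S : Set (ι →₀ ℕ)} (hS : HasSymmetricExchange S) :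
    HasSymmetricExchange (S + Set.range fun i ↦ Finsupp.single i 1) := by
  rintro _ ⟨a, ha, _, ⟨f, rfl⟩, rfl⟩ _ ⟨b, hb, _, ⟨g, rfl⟩, rfl⟩ hxy
  by_cases hfg : f = g
  · subst hfg
    obtain ⟨u, hu, v, hv, huv, i, j, hij, hux⟩ := hS a ha b hb fun h ↦ hxy (h ▸ rfl)
    refine ⟨u + _, Set.add_mem_add hu ⟨f, rfl⟩, v + _, Set.add_mem_add hv ⟨f, rfl⟩, ?_,
      i, j, hij, ?_⟩
    · rw [add_add_add_comm, huv, add_add_add_comm]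
    · rw [add_right_comm, hux, add_right_comm]
  · exact ⟨a + _, Set.add_mem_add ha ⟨g, rfl⟩, b + _, Set.add_mem_add hb ⟨f, rfl⟩,
      by dsimp only; abel, g, f, Ne.symm hfg, add_right_comm ..⟩

theorem HasSymmetricExchange.exists_sub_eq_smul_of_isExtreme [DecidableEq ι] {S : Set (ι →₀ ℕ)}
    (hS : HasSymmetricExchange S) {x y : ι → ℝ} (hxy : x ≠ y)
    (h : IsExtreme ℝ (convexHull ℝ (exponentVector '' S)) (segment ℝ x y)) :
    ∃ i j, i ≠ j ∧ ∃ c : ℝ, y - x = c • (Pi.single i 1 - Pi.single j 1) := by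
  have h' : IsExtreme ℝ (convexHull ℝ (exponentVector '' S)) (segment ℝ y x) :=
    segment_symm ℝ x y ▸ h
  obtain ⟨x, hx, rfl⟩ := extremePoints_convexHull_subset h.left_mem_extremePoints
  obtain ⟨y, hy, rfl⟩ := extremePoints_convexHull_subset h'.left_mem_extremePoints
  obtain ⟨u, hu, v, hv, huv, i, j, hij, hux⟩ := hS x hx y hy (ne_of_apply_ne _ hxy)
  have hdir : exponentVector u - exponentVector x = Pi.single i 1 - Pi.single j 1 := by
    rw [← exponentVector_single, ← exponentVector_single, sub_eq_sub_iff_add_eq_add, ← map_add,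
      ← map_add, hux, add_comm]
  have hne : exponentVector u ≠ exponentVector x := by
    refine exponentVector_injective.ne ?_
    rintro rfl
    exact hij ((Finsupp.single_left_inj one_ne_zero).mp (add_left_cancel hux)).symm
  obtain ⟨c, hc⟩ := h.exists_sub_eq_smul_of_add_eq (subset_convexHull ℝ _ ⟨u, hu, rfl⟩)
    (subset_convexHull ℝ _ ⟨v, hv, rfl⟩) (by rw [← map_add, huv, map_add]) hne
  exact ⟨i, j, hij, c, hdir ▸ hc⟩

end Exchange

section SpanningTrees

variable {V : Type*} {G : SimpleGraph V} [Finite G.edgeSet]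

theorem exists_cotreeExponent_exchange {T₁ T₂ : SimpleGraph V} (hT₁G : T₁ ≤ G) (hT₁ : T₁.IsTree)
    (hT₂G : T₂ ≤ G) (hT₂ : T₂.IsTree) {i : G.edgeSet} (hi₁ : (i : Sym2 V) ∈ T₁.edgeSet)
    (hi₂ : (i : Sym2 V) ∉ T₂.edgeSet) :
    ∃ j : G.edgeSet, i ≠ j ∧ ∃ T₁' T₂' : SimpleGraph V, (T₁' ≤ G ∧ T₁'.IsTree) ∧
      (T₂' ≤ G ∧ T₂'.IsTree) ∧
      cotreeExponent G T₁' + Finsupp.single j 1 = cotreeExponent G T₁ + Finsupp.single i 1 ∧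
      cotreeExponent G T₂' + Finsupp.single i 1 = cotreeExponent G T₂ + Finsupp.single j 1 := by
  obtain ⟨f, hf₂, hf₁, ⟨T₁', hT₁', hE₁⟩, T₂', hT₂', hE₂⟩ := hT₁.exists_exchange hT₂ hi₁ hi₂
  obtain ⟨j, rfl⟩ : ∃ j : G.edgeSet, (j : Sym2 V) = f :=
    ⟨⟨f, SimpleGraph.edgeSet_mono hT₂G hf₂⟩, rfl⟩
  refine ⟨j, fun h ↦ hf₁ (h ▸ hi₁), T₁', T₂', ⟨?_, hT₁'⟩, ⟨?_, hT₂'⟩,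
    cotreeExponent_add_single_eq G hi₁ hf₁ hE₁, cotreeExponent_add_single_eq G hf₂ hi₂ hE₂⟩
  · rw [← SimpleGraph.edgeSet_subset_edgeSet, hE₁]
    exact Set.insert_subset j.2 (Set.sdiff_subset.trans (SimpleGraph.edgeSet_mono hT₁G))
  · rw [← SimpleGraph.edgeSet_subset_edgeSet, hE₂]
    exact Set.insert_subset i.2 (Set.sdiff_subset.trans (SimpleGraph.edgeSet_mono hT₂G))

variable (G) in
theorem hasSymmetricExchange_cotreeExponent :
    HasSymmetricExchange (cotreeExponent G '' {T | T ≤ G ∧ T.IsTree}) := by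
  have add_eq {a b x y c d : G.edgeSet →₀ ℕ} (h₁ : a + c = x + d) (h₂ : b + d = y + c) :
      a + b = x + y :=
    add_right_cancel (b := c + d) (by rw [add_add_add_comm, h₁, h₂, add_add_add_comm, add_comm d])
  rintro _ ⟨T₁, ⟨hT₁G, hT₁⟩, rfl⟩ _ ⟨T₂, ⟨hT₂G, hT₂⟩, rfl⟩ hne
  obtain ⟨i, hi⟩ := DFunLike.ne_iff.mp hne
  by_cases hi₁ : (i : Sym2 V) ∈ T₁.edgeSet
  · have hi₂ : (i : Sym2 V) ∉ T₂.edgeSet := fun hi₂ ↦ hi (by simp [cotreeExponent, hi₁, hi₂])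
    obtain ⟨j, hij, T₁', T₂', hT₁', hT₂', h₁, h₂⟩ :=
      exists_cotreeExponent_exchange hT₁G hT₁ hT₂G hT₂ hi₁ hi₂
    exact ⟨_, ⟨T₁', hT₁', rfl⟩, _, ⟨T₂', hT₂', rfl⟩, add_eq h₁ h₂, i, j, hij, h₁⟩
  · have hi₂ : (i : Sym2 V) ∈ T₂.edgeSet :=
      by_contra fun hi₂ ↦ hi (by simp [cotreeExponent, hi₁, hi₂])
    obtain ⟨j, hij, T₂', T₁', hT₂', hT₁', h₂, h₁⟩ :=
      exists_cotreeExponent_exchange hT₂G hT₂ hT₁G hT₁ hi₂ hi₁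
    exact ⟨_, ⟨T₁', hT₁', rfl⟩, _, ⟨T₂', hT₂', rfl⟩, add_eq h₁ h₂, j, i, hij.symm, h₁⟩

end SpanningTrees

theorem symanzik_F_newton_polytope_generalized_permutohedron_general
    {V : Type} [Fintype V] [DecidableEq V] (G : SimpleGraph V) [DecidableRel G.Adj]
    (U : MvPolynomial G.edgeSet ℝ)
    (hU : U = ∑ T ∈ Finset.univ.filter (fun T : SimpleGraph V => T ≤ G ∧ T.IsTree),
      ∏ e : G.edgeSet, if (e : Sym2 V) ∈ T.edgeSet then 1 else X e)
    (m : G.edgeSet → ℝ) (hm : ∀ e, m e ≠ 0)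
    (newton : MvPolynomial G.edgeSet ℝ → Set (G.edgeSet → ℝ))
    (hnewton : ∀ f : MvPolynomial G.edgeSet ℝ,
      newton f = convexHull ℝ ((fun d : G.edgeSet →₀ ℕ => fun e => (d e : ℝ)) '' ↑f.support))
    (Δ : Set (G.edgeSet → ℝ))
    (hΔ : Δ = convexHull ℝ (Set.range fun e : G.edgeSet => (Pi.single e 1 : G.edgeSet → ℝ)))
    (F0 : MvPolynomial G.edgeSet ℝ) (hF0pos : ∀ d, 0 ≤ F0.coeff d)
    (hF0newton : newton F0 ⊆ newton U + Δ)
    (F : MvPolynomial G.edgeSet ℝ)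
    (hF : F = F0 + U * ∑ e : G.edgeSet, C (m e ^ 2) * X e) :
    newton F = newton U + Δ ∧
    ∀ x y : G.edgeSet → ℝ, x ≠ y → IsExtreme ℝ (newton F) (segment ℝ x y) →
      ∃ i j : G.edgeSet, i ≠ j ∧ ∃ c : ℝ,
        y - x = c • ((Pi.single i 1 : G.edgeSet → ℝ) - Pi.single j 1) := by
  obtain rfl : newton = newtonPolytope := funext hnewton
  set L := ∑ e : G.edgeSet, C (m e ^ 2) * X e
  have hU' : U = ∑ T ∈ Finset.univ.filter (fun T : SimpleGraph V => T ≤ G ∧ T.IsTree),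
      monomial (cotreeExponent G T) 1 := by
    simp_rw [hU, prod_ite_one_X_eq_monomial_cotreeExponent]
  have hUpos : ∀ d, 0 ≤ U.coeff d := hU' ▸ coeff_sum_monomial_nonneg _ _ fun _ _ ↦ zero_le_one
  have hLpos : ∀ d, 0 ≤ L.coeff d := coeff_sum_C_mul_X_nonneg fun e ↦ sq_nonneg (m e)
  have hsuppU : (↑U.support : Set (G.edgeSet →₀ ℕ)) =
      cotreeExponent G '' {T | T ≤ G ∧ T.IsTree} := by
    rw [hU', support_sum_monomial_of_pos _ _ fun _ _ ↦ zero_lt_one, Finset.coe_filter_univ]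
  have hsuppL : (↑L.support : Set (G.edgeSet →₀ ℕ)) = _ :=
    coe_support_sum_C_mul_X fun e ↦ sq_pos_of_ne_zero (hm e)
  have hNUL : newtonPolytope (U * L) = newtonPolytope U + Δ := by
    rw [newtonPolytope_mul_of_nonneg hUpos hLpos, hΔ, newtonPolytope.eq_1 L, hsuppL,
      exponentVector_image_range_single]
  have hNF : newtonPolytope F = newtonPolytope (U * L) :=
    hF ▸ newtonPolytope_add_of_subset hF0pos (coeff_mul_nonneg hUpos hLpos) (hNUL ▸ hF0newton)
  refine ⟨hNF.trans hNUL, fun x y hxy hext ↦ ?_⟩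
  rw [hNF, newtonPolytope, support_mul_of_nonneg hUpos hLpos, Finset.coe_add, hsuppU, hsuppL]
    at hext
  exact (hasSymmetricExchange_cotreeExponent G).add_range_single.exists_sub_eq_smul_of_isExtreme
    hxy hext

/-- Let `G` be a finite connected simple graph with first Symanzik
polynomial `U = ∑_T ∏_{e ∉ E(T)} x_e`, let `m : E → ℝ` be nowhere zero, and let `F₀` be
a polynomial with nonnegative coefficients whose Newton polytope is contained in
`N[U] + Δ`, where `Δ` is the standard simplex of unit vectors in `ℝᴱ`. Then
`F = F₀ + U · ∑_e m_e² x_e` satisfies `N[F] = N[U] + Δ`, and `N[F]` is a generalized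
permutohedron. -/
theorem symanzik_F_newton_polytope_generalized_permutohedron
    {V : Type} [Fintype V] [DecidableEq V] (G : SimpleGraph V) [DecidableRel G.Adj]
    (hG : G.Connected)
    (U : MvPolynomial G.edgeSet ℝ)
    (hU : U = ∑ T ∈ Finset.univ.filter (fun T : SimpleGraph V => T ≤ G ∧ T.IsTree),
      ∏ e : G.edgeSet, if (e : Sym2 V) ∈ T.edgeSet then 1 else X e)
    (m : G.edgeSet → ℝ) (hm : ∀ e, m e ≠ 0)
    (newton : MvPolynomial G.edgeSet ℝ → Set (G.edgeSet → ℝ))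
    (hnewton : ∀ f : MvPolynomial G.edgeSet ℝ,
      newton f = convexHull ℝ ((fun d : G.edgeSet →₀ ℕ => fun e => (d e : ℝ)) '' ↑f.support))
    (Δ : Set (G.edgeSet → ℝ))
    (hΔ : Δ = convexHull ℝ (Set.range fun e : G.edgeSet => (Pi.single e 1 : G.edgeSet → ℝ)))
    (F0 : MvPolynomial G.edgeSet ℝ) (hF0pos : ∀ d, 0 ≤ F0.coeff d)
    (hF0newton : newton F0 ⊆ newton U + Δ)
    (F : MvPolynomial G.edgeSet ℝ)
    (hF : F = F0 + U * ∑ e : G.edgeSet, C (m e ^ 2) * X e) :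
    newton F = newton U + Δ ∧
    ∀ x y : G.edgeSet → ℝ, x ≠ y → IsExtreme ℝ (newton F) (segment ℝ x y) →
      ∃ i j : G.edgeSet, i ≠ j ∧ ∃ c : ℝ,
        y - x = c • ((Pi.single i 1 : G.edgeSet → ℝ) - Pi.single j 1) :=
  symanzik_F_newton_polytope_generalized_permutohedron_general G U hU m hm newton hnewton Δ hΔ F0
    hF0pos hF0newton F hF
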